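/- Let (x*, x) be a primitive pair in Z^3 (i.e. x* ∧ x is a primitive integer point), let H = ||x* ∧ x||, and let u = H^{-1}(x* ∧ x). Then there exists y in Z^3 with det(x*, x, y) = 1 such that y = r x* + s x + H^{-1} u with r, s real and |s| ≤ 1/2, and for any real Y ≥ 2(||x*|| + ||x||), y can moreover be chosen (adding a suitable integer multiple of x*) with Y ≤ ||y|| ≤ 2Y. -/

import Mathlib

/-!
Since `n = x* ∧ x` is primitive, Bézout gives `y₀ ∈ ℤ³` with `det (x*, x, y₀) = n · y₀ = 1`. The
component along `n` of any `y` with `n · y = 1` is `H⁻² n`, so `y = r x* + s x + H⁻¹ u` for real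
`r, s` (Gram's formulas). Adding integer multiples of `x*` and `x` keeps the determinant and moves
`r, s` by integers, so we may take `|r|, |s| ≤ 1/2`; such a `y` has norm at most
`(‖x*‖ + ‖x‖)/2 + 1 < Y`. Walking along `x*` from it, the norm is unbounded and grows by at most
`‖x*‖ ≤ Y/2` per step, so the first point of norm `≥ Y` has norm `< Y + ‖x*‖ ≤ 2Y`.
-/

noncomputable section

/-- Cross product in ℝ³. -/
def cross3 (x y : Fin 3 → ℝ) : Fin 3 → ℝ :=
  ![x 1 * y 2 - x 2 * y 1, x 2 * y 0 - x 0 * y 2, x 0 * y 1 - x 1 * y 0]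

/-- Scalar product in ℝ³. -/
def dot3 (x y : Fin 3 → ℝ) : ℝ := x 0 * y 0 + x 1 * y 1 + x 2 * y 2

/-- Euclidean norm in ℝ³. -/
def nrm (x : Fin 3 → ℝ) : ℝ := Real.sqrt (dot3 x x)

/-- Projective distance between nonzero vectors of ℝ³. -/
def pdist (x y : Fin 3 → ℝ) : ℝ := nrm (cross3 x y) / (nrm x * nrm y)

/-- The canonical map ℤ³ → ℝ³. -/
def toR (x : Fin 3 → ℤ) : Fin 3 → ℝ := fun i => (x i : ℝ)

/-- Determinant of three vectors of ℝ³. -/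
def det3 (a b c : Fin 3 → ℝ) : ℝ :=
  a 0 * (b 1 * c 2 - b 2 * c 1) - a 1 * (b 0 * c 2 - b 2 * c 0) + a 2 * (b 0 * c 1 - b 1 * c 0)

/-- Determinant of three vectors of ℤ³. -/
def det3Z (a b c : Fin 3 → ℤ) : ℤ :=
  a 0 * (b 1 * c 2 - b 2 * c 1) - a 1 * (b 0 * c 2 - b 2 * c 0) + a 2 * (b 0 * c 1 - b 1 * c 0)

/-- Cross product of integer vectors. -/
def crossZ (x y : Fin 3 → ℤ) : Fin 3 → ℤ :=
  ![x 1 * y 2 - x 2 * y 1, x 2 * y 0 - x 0 * y 2, x 0 * y 1 - x 1 * y 0]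

/-- A point of ℤ³ is primitive if its coordinates are coprime (in particular it is nonzero). -/
def IsPrimitive (x : Fin 3 → ℤ) : Prop := Int.gcd (Int.gcd (x 0) (x 1)) (x 2) = 1

/-- A pair of points of ℤ³ is primitive if their cross product is a primitive point. -/
def PrimPair (x y : Fin 3 → ℤ) : Prop := IsPrimitive (crossZ x y)

/-- The golden ratio. -/
def γ : ℝ := (1 + Real.sqrt 5) / 2

lemma dot3_self_nonneg (v : Fin 3 → ℝ) : 0 ≤ dot3 v v := by
  unfold dot3; nlinarith [mul_self_nonneg (v 0), mul_self_nonneg (v 1), mul_self_nonneg (v 2)]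

lemma nrm_eq_norm_toLp (v : Fin 3 → ℝ) : nrm v = ‖WithLp.toLp 2 v‖ := by
  simp [EuclideanSpace.norm_eq, nrm, dot3, Fin.sum_univ_three, ← sq]

lemma eq_zero_of_dot3_self_eq_zero {v : Fin 3 → ℝ} (h : dot3 v v = 0) : v = 0 := by
  have : ‖WithLp.toLp 2 v‖ = 0 := by rw [← nrm_eq_norm_toLp, nrm, h, Real.sqrt_zero]
  simpa using this

lemma nrm_nonneg (v : Fin 3 → ℝ) : 0 ≤ nrm v := Real.sqrt_nonneg _

lemma nrm_add_le (u v : Fin 3 → ℝ) : nrm (u + v) ≤ nrm u + nrm v := by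
  simpa only [nrm_eq_norm_toLp, WithLp.toLp_add] using norm_add_le _ _

lemma nrm_smul (c : ℝ) (v : Fin 3 → ℝ) : nrm (c • v) = |c| * nrm v := by
  rw [nrm_eq_norm_toLp, nrm_eq_norm_toLp, WithLp.toLp_smul, norm_smul, Real.norm_eq_abs]

lemma nrm_smul_add_smul_add_le (r s : ℝ) (a b c : Fin 3 → ℝ) :
    nrm (r • a + s • b + c) ≤ |r| * nrm a + |s| * nrm b + nrm c := by
  have := nrm_add_le (r • a) (s • b)
  rw [nrm_smul, nrm_smul] at this
  linarith [nrm_add_le (r • a + s • b) c]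

lemma det3_eq_dot3_cross3 (a b y : Fin 3 → ℝ) : det3 a b y = dot3 (cross3 a b) y := by
  simp only [det3, dot3, cross3, Matrix.cons_val_zero, Matrix.cons_val_one, Matrix.cons_val]
  ring

lemma dot3_cross3_self_smul_eq (a b y : Fin 3 → ℝ) :
    dot3 (cross3 a b) (cross3 a b) • y =
      (dot3 y a * dot3 b b - dot3 y b * dot3 a b) • a +
        (dot3 y b * dot3 a a - dot3 y a * dot3 a b) • b + dot3 (cross3 a b) y • cross3 a b := by
  funext i
  fin_cases i <;>
    simp only [dot3, cross3, Matrix.cons_val_zero, Matrix.cons_val_one, Matrix.cons_val,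
      Fin.zero_eta, Fin.mk_one, Fin.reduceFinMk, Pi.smul_apply, smul_eq_mul, Pi.add_apply] <;>
    ring

/-- With `H = ‖a ∧ b‖` and `u = H⁻¹ (a ∧ b)`, this is `H⁻¹ u`, the component along `a ∧ b`
of every `y` with `det (a, b, y) = 1`. -/
def normalPart (a b : Fin 3 → ℝ) : Fin 3 → ℝ :=
  (nrm (cross3 a b))⁻¹ • ((nrm (cross3 a b))⁻¹ • cross3 a b)

lemma nrm_normalPart (a b : Fin 3 → ℝ) : nrm (normalPart a b) = (nrm (cross3 a b))⁻¹ := by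
  rw [normalPart, nrm_smul, nrm_smul, abs_inv, abs_of_nonneg (nrm_nonneg _)]
  rcases eq_or_ne (nrm (cross3 a b)) 0 with h | h
  · simp [h]
  · rw [inv_mul_cancel₀ h, mul_one]

lemma exists_eq_smul_add_smul_add_of_det3_eq_one {a b y : Fin 3 → ℝ} (h : det3 a b y = 1) :
    ∃ r s : ℝ, y = r • a + s • b + normalPart a b := by
  set n := cross3 a b with hn
  rw [det3_eq_dot3_cross3, ← hn] at h
  have hN : nrm n * nrm n = dot3 n n := Real.mul_self_sqrt (dot3_self_nonneg n)
  have hN0 : dot3 n n ≠ 0 := by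
    intro h0
    simp [eq_zero_of_dot3_self_eq_zero h0, dot3] at h
  have key := dot3_cross3_self_smul_eq a b y
  rw [← hn, h, one_smul] at key
  refine ⟨(dot3 n n)⁻¹ * (dot3 y a * dot3 b b - dot3 y b * dot3 a b),
    (dot3 n n)⁻¹ * (dot3 y b * dot3 a a - dot3 y a * dot3 a b), ?_⟩
  rw [normalPart, smul_smul, ← mul_inv, hN, mul_smul, mul_smul, ← smul_add, ← smul_add,
    ← key, inv_smul_smul₀ hN0]

lemma toR_add_zsmul (a b : Fin 3 → ℤ) (k : ℤ) :
    toR (a + k • b) = toR a + (k : ℝ) • toR b := by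
  funext i; simp [toR]

lemma cross3_toR (a b : Fin 3 → ℤ) : cross3 (toR a) (toR b) = toR (crossZ a b) := by
  funext i; fin_cases i <;> simp [cross3, crossZ, toR]

lemma det3_toR (a b c : Fin 3 → ℤ) : det3 (toR a) (toR b) (toR c) = det3Z a b c := by
  simp [det3, det3Z, toR]

lemma one_le_nrm_toR {v : Fin 3 → ℤ} (hv : v ≠ 0) : 1 ≤ nrm (toR v) := by
  obtain ⟨i, hi⟩ : ∃ i, v i ≠ 0 := Function.ne_iff.mp hv
  have hvi : (1 : ℤ) ≤ v i * v i := by nlinarith [Int.one_le_abs hi, abs_mul_abs_self (v i)]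
  have hsum : (1 : ℤ) ≤ ∑ j, v j * v j :=
    hvi.trans (Finset.single_le_sum (fun j _ => mul_self_nonneg (v j)) (Finset.mem_univ i))
  rw [Fin.sum_univ_three] at hsum
  rw [nrm, Real.one_le_sqrt]
  simp only [dot3, toR]
  exact_mod_cast hsum

lemma nrm_normalPart_toR_le_one {a b : Fin 3 → ℤ} (h : crossZ a b ≠ 0) :
    nrm (normalPart (toR a) (toR b)) ≤ 1 := by
  rw [nrm_normalPart, cross3_toR]
  exact inv_le_one_of_one_le₀ (one_le_nrm_toR h)

lemma det3Z_eq_sum (a b y : Fin 3 → ℤ) :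
    det3Z a b y = crossZ a b 0 * y 0 + crossZ a b 1 * y 1 + crossZ a b 2 * y 2 := by
  simp only [det3Z, crossZ, Matrix.cons_val_zero, Matrix.cons_val_one, Matrix.cons_val]
  ring

lemma det3Z_add_zsmul_left (a b y : Fin 3 → ℤ) (k : ℤ) :
    det3Z a b (y + k • a) = det3Z a b y := by
  simp only [det3Z, Pi.add_apply, Pi.smul_apply, smul_eq_mul]
  ring

lemma det3Z_add_zsmul_right (a b y : Fin 3 → ℤ) (k : ℤ) :
    det3Z a b (y + k • b) = det3Z a b y := by
  simp only [det3Z, Pi.add_apply, Pi.smul_apply, smul_eq_mul]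
  ring

lemma ne_zero_of_det3Z_eq_one {a b y : Fin 3 → ℤ} (h : det3Z a b y = 1) :
    a ≠ 0 ∧ b ≠ 0 ∧ crossZ a b ≠ 0 := by
  refine ⟨?_, ?_, fun hab => ?_⟩
  · rintro rfl; simp [det3Z] at h
  · rintro rfl; simp [det3Z] at h
  · simp [det3Z_eq_sum, hab] at h

lemma IsPrimitive.exists_sum_mul_eq_one {n : Fin 3 → ℤ} (hn : IsPrimitive n) :
    ∃ y : Fin 3 → ℤ, n 0 * y 0 + n 1 * y 1 + n 2 * y 2 = 1 := by
  set g := Int.gcd (n 0) (n 1)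
  have h01 := Int.gcd_eq_gcd_ab (n 0) (n 1)
  have h2 := Int.gcd_eq_gcd_ab g (n 2)
  rw [hn, Nat.cast_one] at h2
  refine ⟨![Int.gcdA (n 0) (n 1) * Int.gcdA g (n 2), Int.gcdB (n 0) (n 1) * Int.gcdA g (n 2),
    Int.gcdB g (n 2)], ?_⟩
  simp only [Matrix.cons_val_zero, Matrix.cons_val_one, Matrix.cons_val_two, Matrix.head_cons,
    Matrix.tail_cons]
  linear_combination (-Int.gcdA g (n 2)) * h01 - h2

lemma PrimPair.exists_det3Z_eq_one {a b : Fin 3 → ℤ} (h : PrimPair a b) :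
    ∃ y, det3Z a b y = 1 := by
  simpa only [det3Z_eq_sum] using IsPrimitive.exists_sum_mul_eq_one h

lemma PrimPair.exists_reduced {a b : Fin 3 → ℤ} (h : PrimPair a b) :
    ∃ (y : Fin 3 → ℤ) (r s : ℝ), det3Z a b y = 1 ∧
      toR y = r • toR a + s • toR b + normalPart (toR a) (toR b) ∧
        |r| ≤ 1 / 2 ∧ |s| ≤ 1 / 2 := by
  obtain ⟨y, hy⟩ := h.exists_det3Z_eq_one
  obtain ⟨r, s, hyR⟩ := exists_eq_smul_add_smul_add_of_det3_eq_one
    (by rw [det3_toR, hy, Int.cast_one] : det3 (toR a) (toR b) (toR y) = 1)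
  refine ⟨y + (-round r) • a + (-round s) • b, r - round r, s - round s, ?_, ?_,
    abs_sub_round r, abs_sub_round s⟩
  · rw [det3Z_add_zsmul_right, det3Z_add_zsmul_left, hy]
  · rw [toR_add_zsmul, toR_add_zsmul, hyR]; push_cast; module

lemma exists_le_norm_add_smul {E : Type*} [NormedAddCommGroup E] [NormedSpace ℝ E] (y a : E)
    (ha : a ≠ 0) (Y : ℝ) : ∃ m : ℕ, Y ≤ ‖y + (m : ℝ) • a‖ := by
  obtain ⟨m, hm⟩ := exists_nat_ge ((Y + ‖y‖) / ‖a‖)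
  refine ⟨m, ?_⟩
  have ha' : 0 < ‖a‖ := norm_pos_iff.mpr ha
  have : ‖(m : ℝ) • a‖ ≤ ‖y + (m : ℝ) • a‖ + ‖y‖ := by
    simpa using norm_sub_le (y + (m : ℝ) • a) y
  rw [norm_smul, Real.norm_natCast] at this
  rw [div_le_iff₀ ha'] at hm
  linarith

lemma exists_mem_Ico_of_add_le {f : ℕ → ℝ} {Y d : ℝ} (h0 : f 0 < Y)
    (hstep : ∀ n, f (n + 1) ≤ f n + d) (hex : ∃ n, Y ≤ f n) :
    ∃ n, Y ≤ f n ∧ f n < Y + d := by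
  refine ⟨Nat.find hex, Nat.find_spec hex, ?_⟩
  obtain ⟨m, hm⟩ : ∃ m, Nat.find hex = m + 1 :=
    Nat.exists_eq_add_one.mpr (Nat.pos_of_ne_zero fun h => (h ▸ Nat.find_spec hex).not_gt h0)
  have hprev := Nat.find_min hex (m := m) (by omega)
  rw [hm]
  linarith [hstep m, not_le.mp hprev]

lemma exists_norm_add_smul_mem_Ico {E : Type*} [NormedAddCommGroup E] [NormedSpace ℝ E]
    {y a : E} (ha : a ≠ 0) {Y : ℝ} (hy : ‖y‖ < Y) :
    ∃ m : ℕ, Y ≤ ‖y + (m : ℝ) • a‖ ∧ ‖y + (m : ℝ) • a‖ < Y + ‖a‖ := by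
  refine exists_mem_Ico_of_add_le (by simpa using hy) (fun n => ?_)
    (exists_le_norm_add_smul y a ha Y)
  calc ‖y + ((n + 1 : ℕ) : ℝ) • a‖ = ‖(y + (n : ℝ) • a) + a‖ := by
        push_cast; rw [add_smul, one_smul, add_assoc]
    _ ≤ ‖y + (n : ℝ) • a‖ + ‖a‖ := norm_add_le _ _

lemma exists_nrm_toR_add_zsmul_mem_Ico {y a : Fin 3 → ℤ} (ha : a ≠ 0) {Y : ℝ}
    (hy : nrm (toR y) < Y) :
    ∃ m : ℤ, Y ≤ nrm (toR (y + m • a)) ∧ nrm (toR (y + m • a)) < Y + nrm (toR a) := by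
  have ha' : WithLp.toLp 2 (toR a) ≠ 0 := by
    rw [← norm_pos_iff, ← nrm_eq_norm_toLp]; linarith [one_le_nrm_toR ha]
  rw [nrm_eq_norm_toLp] at hy
  obtain ⟨m, hm⟩ := exists_norm_add_smul_mem_Ico ha' hy
  refine ⟨m, ?_⟩
  rwa [toR_add_zsmul, nrm_eq_norm_toLp, nrm_eq_norm_toLp, WithLp.toLp_add, WithLp.toLp_smul]

/-- First step of the recursive construction: choice of the point `y`. -/
theorem stmt7 (xs x : Fin 3 → ℤ) (hprim : PrimPair xs x) :
    (∃ (y : Fin 3 → ℤ) (r s : ℝ), det3Z xs x y = 1 ∧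
      toR y = r • toR xs + s • toR x +
        (nrm (cross3 (toR xs) (toR x)))⁻¹ •
          ((nrm (cross3 (toR xs) (toR x)))⁻¹ • cross3 (toR xs) (toR x)) ∧
      |s| ≤ 1 / 2) ∧
    ∀ Y : ℝ, 2 * (nrm (toR xs) + nrm (toR x)) ≤ Y →
      ∃ (y : Fin 3 → ℤ) (r s : ℝ), det3Z xs x y = 1 ∧
        toR y = r • toR xs + s • toR x +
          (nrm (cross3 (toR xs) (toR x)))⁻¹ •
            ((nrm (cross3 (toR xs) (toR x)))⁻¹ • cross3 (toR xs) (toR x)) ∧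
        |s| ≤ 1 / 2 ∧ Y ≤ nrm (toR y) ∧ nrm (toR y) ≤ 2 * Y := by
  obtain ⟨y, r, s, hdet, hyR, hr, hs⟩ := hprim.exists_reduced
  refine ⟨⟨y, r, s, hdet, hyR, hs⟩, fun Y hY => ?_⟩
  obtain ⟨hxs, hx, hn⟩ := ne_zero_of_det3Z_eq_one hdet
  have hy : nrm (toR y) < Y := by
    have hrxs := mul_le_mul_of_nonneg_right hr (nrm_nonneg (toR xs))
    have hsx := mul_le_mul_of_nonneg_right hs (nrm_nonneg (toR x))
    have := nrm_smul_add_smul_add_le r s (toR xs) (toR x) (normalPart (toR xs) (toR x))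
    rw [← hyR] at this
    linarith [nrm_normalPart_toR_le_one hn, one_le_nrm_toR hxs, one_le_nrm_toR hx]
  obtain ⟨m, hmY, hm2Y⟩ := exists_nrm_toR_add_zsmul_mem_Ico hxs hy
  refine ⟨y + m • xs, r + m, s, by rw [det3Z_add_zsmul_left, hdet], ?_, hs, hmY, ?_⟩
  · rw [toR_add_zsmul, hyR, normalPart]; module
  · linarith [nrm_nonneg (toR x)]
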